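/- Let Ū be a K̄-vector subspace of K̄ⁿ and let π : Kⁿ → K^d be an exhibition of Ū. Suppose x, x' ∈ Kⁿ satisfy dir(x) ⊆ Ū, dir(x') ⊆ Ū, and rv(π(x)) = rv(π(x')). Then rv(x) = rv(x'). -/

import Mathlib

/-!
If `dir z ⊆ Ū`, the projection preserves the valuation of `z`: rescaling `z` so that its
largest coordinate is `1`, its residue is a nonzero vector of `Ū`, and `π̄` is injective on `Ū`,
so some selected coordinate of `z` is already of maximal valuation.

If `rv x ≠ rv x'`, then `v(x - x') ≥ v(x), v(x')`; every rescaling of `x - x'` into `𝒪ⁿ` then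
rescales `x` and `x'` into `𝒪ⁿ` as well, so `dir(x - x') ⊆ Ū` and
`v(πx - πx') = v(x - x') ≥ v(x) ≥ v(πx)`, i.e. `rv(πx) ≠ rv(πx')`. When `rv(πx) = rv(πx')`
because both projections vanish, `x = x' = 0` by the first paragraph.
-/

noncomputable section

open scoped Classical Pointwise

section Preamble

variable {K : Type*} [Field K] {Γ : Type*} [LinearOrderedCommGroupWithZero Γ]

instance (priority := 100) : OrderBot Γ where
  bot := 0
  bot_le _ := zero_le'

/-- The max-valuation on `K^n`: `v(a) = maxᵢ v(aᵢ)`. -/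
def vv (v : Valuation K Γ) {n : ℕ} (x : Fin n → K) : Γ :=
  Finset.univ.sup fun i => v (x i)

/-- `rvEq v x y` expresses `rv(x) = rv(y)` in `RV⁽ⁿ⁾ = Kⁿ/∼`, where
`x ∼ y` iff `v(x−y) < v(x)` or `x = y = 0`. -/
def rvEq (v : Valuation K Γ) {n : ℕ} (x y : Fin n → K) : Prop :=
  vv v (x - y) < vv v x ∨ (x = 0 ∧ y = 0)

/-- Balls in `K` (with `K` itself counting as a ball). -/
def IsBall1 (v : Valuation K Γ) (B : Set K) : Prop :=
  B = Set.univ ∨ ∃ a : K, ∃ γ : Γ, γ ≠ 0 ∧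
    (B = {x | v (x - a) < γ} ∨ B = {x | v (x - a) ≤ γ})

/-- Balls in `Kⁿ` (with `Kⁿ` itself counting as a ball). -/
def IsBall (v : Valuation K Γ) {n : ℕ} (B : Set (Fin n → K)) : Prop :=
  B = Set.univ ∨ ∃ a : Fin n → K, ∃ γ : Γ, γ ≠ 0 ∧
    (B = {x | vv v (x - a) < γ} ∨ B = {x | vv v (x - a) ≤ γ})

/-- Spherical completeness: every nonempty chain of balls in `K` has nonempty
intersection. -/
def SphericallyComplete (v : Valuation K Γ) : Prop :=
  ∀ C : Set (Set K), C.Nonempty → (∀ B ∈ C, IsBall1 v B) → IsChain (· ⊆ ·) C →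
    (⋂ B ∈ C, B).Nonempty

/-- The residue field `K̄` of the valuation ring `𝒪 = {x | v x ≤ 1}`. -/
def Kbar (v : Valuation K Γ) : Type _ :=
  IsLocalRing.ResidueField v.valuationSubring

instance (v : Valuation K Γ) : Field (Kbar v) :=
  inferInstanceAs (Field (IsLocalRing.ResidueField v.valuationSubring))

/-- The residue map `res : 𝒪 → K̄`, extended by the junk value `0` outside `𝒪`. -/
def res' (v : Valuation K Γ) (x : K) : Kbar v :=
  if h : v x ≤ 1 then IsLocalRing.residue v.valuationSubring ⟨x, h⟩ else 0

/-- The coordinatewise residue map on `Kⁿ`. -/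
def resv (v : Valuation K Γ) {n : ℕ} (x : Fin n → K) : Fin n → Kbar v :=
  fun i => res' v (x i)

/-- `res(S)` for a set `S ⊆ Kⁿ`: the set of residues of points of `S ∩ 𝒪ⁿ`. -/
def resSet (v : Valuation K Γ) {n : ℕ} (S : Set (Fin n → K)) : Set (Fin n → Kbar v) :=
  resv v '' {x ∈ S | ∀ i, v (x i) ≤ 1}

/-- `dir(x) = res(K·x) ⊆ K̄ⁿ`. -/
def dirSet (v : Valuation K Γ) {n : ℕ} (x : Fin n → K) : Set (Fin n → Kbar v) :=
  resSet v {y | ∃ c : K, y = c • x}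

/-- The coordinate projection `Kⁿ → K^d` selecting the coordinates `σ 0 < σ 1 < ⋯`. -/
def proj {A : Type*} {n d : ℕ} (σ : Fin d → Fin n) (x : Fin n → A) : Fin d → A :=
  fun k => x (σ k)

/-- `σ` (a strictly increasing selection of `d` of the `n` coordinates) is an
exhibition of the `K̄`-subspace `Ū ⊆ K̄ⁿ` if the corresponding coordinate projection
`K̄ⁿ → K̄^d` restricts to an isomorphism from `Ū` onto `K̄^d`. -/
def IsExhibition (v : Valuation K Γ) {n d : ℕ} (σ : Fin d → Fin n)
    (Ubar : Submodule (Kbar v) (Fin n → Kbar v)) : Prop :=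
  StrictMono σ ∧ Set.BijOn (proj σ) (Ubar : Set (Fin n → Kbar v)) Set.univ

/-- `affdir(C)`: the `K̄`-subspace of `K̄ⁿ` generated by all `dir(x − x')`, `x, x' ∈ C`. -/
def affdir (v : Valuation K Γ) {n : ℕ} (C : Set (Fin n → K)) :
    Submodule (Kbar v) (Fin n → Kbar v) :=
  Submodule.span (Kbar v) (⋃ x ∈ C, ⋃ x' ∈ C, dirSet v (x - x'))

/-- A matrix has entries in the valuation ring `𝒪`. -/
def EntriesInO (v : Valuation K Γ) {n : ℕ} (M : Matrix (Fin n) (Fin n) K) : Prop :=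
  ∀ i j, v (M i j) ≤ 1

/-- `M ∈ GLₙ(𝒪)`: `M` is invertible, with entries in `𝒪`, and its inverse also has
entries in `𝒪`. -/
def MemGLO (v : Valuation K Γ) {n : ℕ} (M : Matrix (Fin n) (Fin n) K) : Prop :=
  EntriesInO v M ∧ ∃ N : Matrix (Fin n) (Fin n) K,
    M * N = 1 ∧ N * M = 1 ∧ EntriesInO v N

/-- The entrywise residue matrix of `M`. -/
def resM (v : Valuation K Γ) {n : ℕ} (M : Matrix (Fin n) (Fin n) K) :
    Matrix (Fin n) (Fin n) (Kbar v) :=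
  fun i j => res' v (M i j)

/-- `DeltaLE v U W γ` expresses `Δ(U, W) ≤ γ`: for every `u ∈ U` there is `w ∈ W`
with `v(u − w) ≤ v(u)·γ`. -/
def DeltaLE (v : Valuation K Γ) {n : ℕ} (U W : Submodule K (Fin n → K)) (γ : Γ) : Prop :=
  ∀ u ∈ U, ∃ w ∈ W, vv v (u - w) ≤ vv v u * γ

/-- `IsDelta v U W γ` expresses `Δ(U, W) = γ`: `γ` is the minimum of all admissible
bounds. -/
def IsDelta (v : Valuation K Γ) {n : ℕ} (U W : Submodule K (Fin n → K)) (γ : Γ) : Prop :=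
  DeltaLE v U W γ ∧ ∀ δ : Γ, DeltaLE v U W δ → γ ≤ δ

end Preamble

variable {K : Type*} [Field K] {Γ : Type*} [LinearOrderedCommGroupWithZero Γ]

section MaxValuation

variable (v : Valuation K Γ) {n : ℕ}

lemma vv_le_iff {x : Fin n → K} {γ : Γ} : vv v x ≤ γ ↔ ∀ i, v (x i) ≤ γ := by
  simp [vv, Finset.sup_le_iff]

lemma le_vv (x : Fin n → K) (i : Fin n) : v (x i) ≤ vv v x :=
  (vv_le_iff v).1 le_rfl i

@[simp]
lemma vv_zero : vv v (0 : Fin n → K) = 0 :=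
  le_antisymm ((vv_le_iff v).2 fun _ => by simp) zero_le

lemma vv_eq_zero_iff {x : Fin n → K} : vv v x = 0 ↔ x = 0 := by
  refine ⟨fun h => funext fun i => ?_, fun h => h ▸ vv_zero v⟩
  simpa [h] using le_vv v x i

lemma exists_eq_vv {x : Fin n → K} (hx : x ≠ 0) : ∃ i, v (x i) = vv v x := by
  obtain ⟨j, -⟩ := Function.ne_iff.1 hx
  obtain ⟨i, -, hi⟩ := Finset.exists_mem_eq_sup Finset.univ ⟨j, Finset.mem_univ j⟩
    fun i => v (x i)
  exact ⟨i, hi.symm⟩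

lemma vv_smul (c : K) (x : Fin n → K) : vv v (c • x) = v c * vv v x := by
  refine le_antisymm ((vv_le_iff v).2 fun i => ?_) ?_
  · simpa using mul_le_mul_right (le_vv v x i) (v c)
  · rcases eq_or_ne x 0 with rfl | hx
    · simp
    obtain ⟨i, hi⟩ := exists_eq_vv v hx
    simpa [← hi] using le_vv v (c • x) i

lemma vv_sub_le_max (x y : Fin n → K) : vv v (x - y) ≤ max (vv v x) (vv v y) :=
  (vv_le_iff v).2 fun i => (v.map_sub _ _).trans (max_le_max (le_vv v x i) (le_vv v y i))

lemma vv_proj_le {d : ℕ} (σ : Fin d → Fin n) (x : Fin n → K) : vv v (proj σ x) ≤ vv v x :=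
  (vv_le_iff v).2 fun k => le_vv v x (σ k)

end MaxValuation

section Residue

variable (v : Valuation K Γ) {n : ℕ}

lemma res'_of_le_one {a : K} (ha : v a ≤ 1) :
    res' v a = IsLocalRing.residue v.valuationSubring ⟨a, ha⟩ :=
  dif_pos ha

@[simp]
lemma res'_one : res' v 1 = 1 := by
  rw [res'_of_le_one v (v.map_one.le)]
  exact map_one _

lemma res'_eq_zero_of_lt_one {a : K} (ha : v a < 1) : res' v a = 0 := by
  rw [res'_of_le_one v ha.le]
  exact (IsLocalRing.residue_eq_zero_iff _).2 ((v.mem_maximalIdeal_iff).2 ha)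

lemma res'_sub {a b : K} (ha : v a ≤ 1) (hb : v b ≤ 1) :
    res' v (a - b) = res' v a - res' v b := by
  rw [res'_of_le_one v ha, res'_of_le_one v hb,
    res'_of_le_one v ((v.map_sub a b).trans (max_le ha hb))]
  exact map_sub (IsLocalRing.residue v.valuationSubring) ⟨a, ha⟩ ⟨b, hb⟩

lemma resv_sub {x y : Fin n → K} (hx : vv v x ≤ 1) (hy : vv v y ≤ 1) :
    resv v (x - y) = resv v x - resv v y :=
  funext fun i => res'_sub v ((le_vv v x i).trans hx) ((le_vv v y i).trans hy)

lemma dirSet_subset_iff {x : Fin n → K} {S : Set (Fin n → Kbar v)} :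
    dirSet v x ⊆ S ↔ ∀ c : K, vv v (c • x) ≤ 1 → resv v (c • x) ∈ S := by
  constructor
  · exact fun h c hc => h ⟨c • x, ⟨⟨c, rfl⟩, (vv_le_iff v).1 hc⟩, rfl⟩
  · rintro h _ ⟨_, ⟨⟨c, rfl⟩, hc⟩, rfl⟩
    exact h c ((vv_le_iff v).2 hc)

end Residue

section Exhibition

variable {v : Valuation K Γ} {n d : ℕ} {σ : Fin d → Fin n}
  {Ubar : Submodule (Kbar v) (Fin n → Kbar v)}

lemma dirSet_sub_subset {x x' : Fin n → K} (hx : dirSet v x ⊆ Ubar) (hx' : dirSet v x' ⊆ Ubar)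
    (hle : vv v x ≤ vv v (x - x')) (hle' : vv v x' ≤ vv v (x - x')) :
    dirSet v (x - x') ⊆ Ubar := by
  rw [dirSet_subset_iff] at hx hx' ⊢
  intro c hc
  rw [vv_smul] at hc
  have hcx : vv v (c • x) ≤ 1 := by
    rw [vv_smul]; exact (mul_le_mul_right hle _).trans hc
  have hcx' : vv v (c • x') ≤ 1 := by
    rw [vv_smul]; exact (mul_le_mul_right hle' _).trans hc
  rw [smul_sub, resv_sub v hcx hcx']
  exact Ubar.sub_mem (hx c hcx) (hx' c hcx')

lemma IsExhibition.eq_zero_of_proj_eq_zero (hσ : IsExhibition v σ Ubar) {u : Fin n → Kbar v}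
    (hu : u ∈ Ubar) (h : proj σ u = 0) : u = 0 :=
  hσ.2.injOn hu Ubar.zero_mem h

lemma IsExhibition.vv_proj_eq (hσ : IsExhibition v σ Ubar) {z : Fin n → K}
    (hz : dirSet v z ⊆ Ubar) : vv v (proj σ z) = vv v z := by
  refine (vv_proj_le v σ z).antisymm (not_lt.1 fun hlt => ?_)
  have hz0 : z ≠ 0 := by
    rintro rfl
    simp at hlt
  obtain ⟨i, hi⟩ := exists_eq_vv v hz0
  have hzi : z i ≠ 0 := fun h => hz0 ((vv_eq_zero_iff v).1 (by rw [← hi, h, map_zero]))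
  set c := (z i)⁻¹
  have hc : v c * vv v z = 1 := by
    rw [map_inv₀, hi, inv_mul_cancel₀ (by rwa [← hi, ne_eq, map_eq_zero])]
  have hu : resv v (c • z) ∈ Ubar := (dirSet_subset_iff v).1 hz c (by rw [vv_smul, hc])
  have hproj : proj σ (resv v (c • z)) = 0 := funext fun k => res'_eq_zero_of_lt_one v <|
    calc v ((c • z) (σ k)) = v c * v (z (σ k)) := by simp
      _ < v c * vv v z := by
        gcongr
        · exact zero_lt_iff.2 ((map_ne_zero v).2 (inv_ne_zero hzi))
        · exact (le_vv v (proj σ z) k).trans_lt hlt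
      _ = 1 := hc
  simpa [resv, c, hzi] using congrFun (hσ.eq_zero_of_proj_eq_zero hu hproj) i

end Exhibition

/-- if `dir x, dir x' ⊆ Ū`, `π` is an exhibition of `Ū`, and
`rv(π x) = rv(π x')`, then `rv x = rv x'`. -/
theorem rv_eq_of_proj_rv_eq
    (v : Valuation K Γ) {n d : ℕ}
    (Ubar : Submodule (Kbar v) (Fin n → Kbar v))
    (σ : Fin d → Fin n) (hσ : IsExhibition v σ Ubar)
    (x x' : Fin n → K)
    (hx : dirSet v x ⊆ (Ubar : Set (Fin n → Kbar v)))
    (hx' : dirSet v x' ⊆ (Ubar : Set (Fin n → Kbar v)))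
    (hproj : rvEq v (proj σ x) (proj σ x')) :
    rvEq v x x' := by
  rcases hproj with hlt | ⟨hx0, hx'0⟩
  · left
    by_contra! hle
    have hle' : vv v x' ≤ vv v (x - x') := by
      simpa using (vv_sub_le_max v x (x - x')).trans (max_le hle le_rfl)
    have hdir := dirSet_sub_subset hx hx' hle hle'
    have := calc vv v (proj σ x) ≤ vv v x := vv_proj_le v σ x
      _ ≤ vv v (x - x') := hle
      _ = vv v (proj σ x - proj σ x') := (hσ.vv_proj_eq hdir).symm
    exact this.not_gt hlt
  · right
    constructor
    · rw [← vv_eq_zero_iff v, ← hσ.vv_proj_eq hx, hx0, vv_zero]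
    · rw [← vv_eq_zero_iff v, ← hσ.vv_proj_eq hx', hx'0, vv_zero]

end
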